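/- arXiv:2312.16704 — 7 statements merged into one kernel-verified Lean document; each statement's English description precedes it below -/
import Mathlib

section
/- Let T be a left-continuous t-norm on [0,1] with residual implicator I, let R be a reflexive fuzzy relation on a finite nonempty set X (R(x,x) = 1 for all x), and let A be a fuzzy set on X. Then an element y ∈ X is consistent, i.e. T(R(x,y), A(y)) ≤ A(x) for all x ∈ X, if and only if min_{x∈X} I(R(x,y), A(x)) = A(y). -/
/-!
Residuation: for `x, y, λ ∈ [0,1]`, `T(x, λ) ≤ y ↔ λ ≤ I(x, y)`; left-continuity is what makes
the supremum defining `I(x, y)` attained. Hence `y` is consistent iff `A y ≤ I(R(x,y), A(x))` for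
all `x`, i.e. iff `A y` is below the minimum, while reflexivity and `I(1, a) = a` bound the minimum
by its term at `x = y`, which is `A y`.
-/

structure IsTNorm (T : ℝ → ℝ → ℝ) : Prop where
  maps_to : ∀ x ∈ Set.Icc (0:ℝ) 1, ∀ y ∈ Set.Icc (0:ℝ) 1, T x y ∈ Set.Icc (0:ℝ) 1
  comm : ∀ x ∈ Set.Icc (0:ℝ) 1, ∀ y ∈ Set.Icc (0:ℝ) 1, T x y = T y x
  assoc : ∀ x ∈ Set.Icc (0:ℝ) 1, ∀ y ∈ Set.Icc (0:ℝ) 1, ∀ z ∈ Set.Icc (0:ℝ) 1,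
      T (T x y) z = T x (T y z)
  mono : ∀ x₁ ∈ Set.Icc (0:ℝ) 1, ∀ x₂ ∈ Set.Icc (0:ℝ) 1, ∀ y₁ ∈ Set.Icc (0:ℝ) 1,
      ∀ y₂ ∈ Set.Icc (0:ℝ) 1, x₁ ≤ x₂ → y₁ ≤ y₂ → T x₁ y₁ ≤ T x₂ y₂
  one_left : ∀ x ∈ Set.Icc (0:ℝ) 1, T 1 x = x

/-- `T` is left-continuous: it commutes with suprema of nonempty subsets of `[0,1]`
in each (equivalently, by commutativity, the second) argument. -/
def LeftContinuousTNorm (T : ℝ → ℝ → ℝ) : Prop :=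
  ∀ x ∈ Set.Icc (0:ℝ) 1, ∀ S : Set ℝ, S.Nonempty → S ⊆ Set.Icc (0:ℝ) 1 →
    T x (sSup S) = sSup (T x '' S)

/-- The residual implicator of `T`: `I(x,y) = sup {λ ∈ [0,1] | T(x,λ) ≤ y}`. -/
noncomputable def resid (T : ℝ → ℝ → ℝ) (x y : ℝ) : ℝ :=
  sSup {l | l ∈ Set.Icc (0:ℝ) 1 ∧ T x l ≤ y}

open Set

namespace IsTNorm

variable {T : ℝ → ℝ → ℝ}

lemma apply_zero_right (hT : IsTNorm T) {x : ℝ} (hx : x ∈ Icc (0:ℝ) 1) : T x 0 = 0 := by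
  have h0 : (0:ℝ) ∈ Icc (0:ℝ) 1 := left_mem_Icc.2 zero_le_one
  have h1 : (1:ℝ) ∈ Icc (0:ℝ) 1 := right_mem_Icc.2 zero_le_one
  have hle : T x 0 ≤ T 1 0 := hT.mono x hx 1 h1 0 h0 0 h0 hx.2 le_rfl
  linarith [(hT.maps_to x hx 0 h0).1, hT.one_left 0 h0]

lemma zero_mem_residSet (hT : IsTNorm T) {x y : ℝ} (hx : x ∈ Icc (0:ℝ) 1)
    (hy : y ∈ Icc (0:ℝ) 1) : (0:ℝ) ∈ {l | l ∈ Icc (0:ℝ) 1 ∧ T x l ≤ y} :=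
  ⟨left_mem_Icc.2 zero_le_one, (hT.apply_zero_right hx).symm ▸ hy.1⟩

lemma resid_mem_Icc (hT : IsTNorm T) {x y : ℝ} (hx : x ∈ Icc (0:ℝ) 1) (hy : y ∈ Icc (0:ℝ) 1) :
    resid T x y ∈ Icc (0:ℝ) 1 :=
  ⟨le_csSup ⟨1, fun _ hl => hl.1.2⟩ (hT.zero_mem_residSet hx hy),
    csSup_le ⟨0, hT.zero_mem_residSet hx hy⟩ fun _ hl => hl.1.2⟩

lemma apply_resid_le (hT : IsTNorm T) (hTlc : LeftContinuousTNorm T) {x y : ℝ}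
    (hx : x ∈ Icc (0:ℝ) 1) (hy : y ∈ Icc (0:ℝ) 1) : T x (resid T x y) ≤ y := by
  have h0 := hT.zero_mem_residSet hx hy
  rw [resid, hTlc x hx _ ⟨0, h0⟩ fun _ hl => hl.1]
  exact csSup_le ⟨_, 0, h0, rfl⟩ (by rintro _ ⟨l, hl, rfl⟩; exact hl.2)

lemma le_resid_iff (hT : IsTNorm T) (hTlc : LeftContinuousTNorm T) {x y l : ℝ}
    (hx : x ∈ Icc (0:ℝ) 1) (hy : y ∈ Icc (0:ℝ) 1) (hl : l ∈ Icc (0:ℝ) 1) :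
    l ≤ resid T x y ↔ T x l ≤ y :=
  ⟨fun h => (hT.mono x hx x hx l hl _ (hT.resid_mem_Icc hx hy) le_rfl h).trans
      (hT.apply_resid_le hTlc hx hy),
    fun h => le_csSup ⟨1, fun _ hl => hl.1.2⟩ ⟨hl, h⟩⟩

lemma resid_one_le (hT : IsTNorm T) {y : ℝ} (hy : y ∈ Icc (0:ℝ) 1) : resid T 1 y ≤ y :=
  csSup_le ⟨0, hT.zero_mem_residSet (right_mem_Icc.2 zero_le_one) hy⟩ fun l hl =>
    hT.one_left l hl.1 ▸ hl.2

end IsTNorm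

/-- for a left-continuous t-norm `T` with residual implicator `I = resid T`,
a reflexive fuzzy relation `R` and a fuzzy set `A` on a finite nonempty `X`,
an element `y` is consistent iff `min_{x} I(R(x,y), A(x)) = A(y)`. -/
theorem stmt0 {X : Type*} [Fintype X] [Nonempty X]
    (T : ℝ → ℝ → ℝ) (hT : IsTNorm T) (hTlc : LeftContinuousTNorm T)
    (R : X → X → ℝ) (hRmem : ∀ x y, R x y ∈ Set.Icc (0:ℝ) 1) (hRrefl : ∀ x, R x x = 1)
    (A : X → ℝ) (hA : ∀ x, A x ∈ Set.Icc (0:ℝ) 1) (y : X) :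
    (∀ x, T (R x y) (A y) ≤ A x) ↔
      Finset.univ.inf' Finset.univ_nonempty (fun x => resid T (R x y) (A x)) = A y := by
  have hmin_le : Finset.univ.inf' Finset.univ_nonempty (fun x => resid T (R x y) (A x)) ≤ A y :=
    (Finset.inf'_le _ (Finset.mem_univ y)).trans (hRrefl y ▸ hT.resid_one_le (hA y))
  have hconsistent_iff : ∀ x, T (R x y) (A y) ≤ A x ↔ A y ≤ resid T (R x y) (A x) := fun x =>
    (hT.le_resid_iff hTlc (hRmem x y) (hA x) (hA y)).symm
  rw [forall_congr' hconsistent_iff, ← hmin_le.ge_iff_eq, Finset.le_inf'_iff]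
  simp only [Finset.mem_univ, true_implies]
end

section
/- (Jensen's inequality for Choquet integrals, convex case.) Let X be a finite nonempty set, μ a monotone measure on X, f : X → [0,∞), and Φ : [0,∞) → [0,∞) a non-decreasing convex function. Then Φ(∫ f dμ) ≤ ∫ (Φ ∘ f) dμ, where both integrals are Choquet integrals w.r.t. μ. -/
/-- A monotone measure on a finite set `X`. -/
structure IsMonotoneMeasure {X : Type*} (μ : Set X → ℝ) : Prop where
  empty : μ ∅ = 0
  univ : μ Set.univ = 1
  mono : ∀ E F : Set X, E ⊆ F → μ E ≤ μ F

/-- The Choquet integral of `f : X → ℝ` w.r.t. `μ` on the finite set `X`: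
`∑ i, f(x*_i) · (μ(A*_i) − μ(A*_{i+1}))` where `x*` enumerates `X` with
`f(x*_1) ≤ … ≤ f(x*_n)` and `A*_i = {x*_i, …, x*_n}` (so `A*_{n+1} = ∅` and `μ ∅ = 0`). -/
noncomputable def choquet {X : Type*} [Fintype X] (μ : Set X → ℝ) (f : X → ℝ) : ℝ :=
  let e : Fin (Fintype.card X) ≃ X := (Fintype.equivFin X).symm
  let σ : Equiv.Perm (Fin (Fintype.card X)) := Tuple.sort (f ∘ e)
  ∑ i : Fin (Fintype.card X),
    f (e (σ i)) * (μ {x | ∃ j, i ≤ j ∧ e (σ j) = x} - μ {x | ∃ j, i < j ∧ e (σ j) = x})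

/-!
If `x*` enumerates `X` increasingly along `f`, it also enumerates `X` increasingly
along `Φ ∘ f`, because `Φ` is non-decreasing. For a fixed enumeration the Choquet sum is the
weighted mean of the values with the weights `μ(A*_i) − μ(A*_{i+1})`, which are non-negative
and sum to `μ X − μ ∅ = 1`, so the finite Jensen inequality applies. What remains is that the
Choquet sum does not depend on which increasing enumeration is used: by Abel summation it equals
`∑ (c_i − c_{i−1}) μ(A*_i)` for the sorted values `c`, and whenever `c_{i−1} < c_i` the tail
`A*_i` is the level set `{x | c_i ≤ g x}`, which is the same for every increasing enumeration.
-/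

open Finset Function

theorem Finset.sum_range_mul_sub_succ {n : ℕ} (c ν : ℕ → ℝ) (hν : ν n = 0) :
    ∑ k ∈ range n, c k * (ν k - ν (k + 1))
      = ∑ k ∈ range n, (c k - if k = 0 then 0 else c (k - 1)) * ν k := by
  cases n with
  | zero => simp
  | succ m =>
    have hshift : ∑ k ∈ range (m + 1), c k * ν (k + 1)
        = ∑ k ∈ range (m + 1), (if k = 0 then 0 else c (k - 1)) * ν k := by
      rw [sum_range_succ, hν, mul_zero, add_zero,
        sum_range_succ' (fun k => (if k = 0 then 0 else c (k - 1)) * ν k)]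
      simp
    simp only [mul_sub, sub_mul, sum_sub_distrib, hshift]

section Enumeration

variable {X : Type*} {n : ℕ}

/-- Indexed by `ℕ`, so that `enumTail E n = ∅`. -/
def enumTail (E : Fin n → X) (k : ℕ) : Set X := {x | ∃ j : Fin n, k ≤ (j : ℕ) ∧ E j = x}

theorem enumTail_zero {E : Fin n → X} (hE : Surjective E) : enumTail E 0 = Set.univ :=
  Set.eq_univ_of_forall fun x => (hE x).imp fun _ hj => ⟨Nat.zero_le _, hj⟩

theorem enumTail_eq_empty (E : Fin n → X) {k : ℕ} (hk : n ≤ k) : enumTail E k = ∅ :=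
  Set.eq_empty_of_forall_notMem fun _ ⟨j, hj, _⟩ => (hk.trans hj).not_gt j.isLt

theorem enumTail_succ_subset (E : Fin n → X) (k : ℕ) : enumTail E (k + 1) ⊆ enumTail E k :=
  fun _ ⟨j, hj, hx⟩ => ⟨j, (Nat.le_succ k).trans hj, hx⟩

theorem enumTail_eq_setOf_le {α : Type*} [LinearOrder α] {g : X → α} {E : Fin n → X}
    (hE : Surjective E) (hmono : Monotone (g ∘ E)) (k : Fin n)
    (hk : ∀ j < k, g (E j) < g (E k)) : enumTail E k = {x | g (E k) ≤ g x} := by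
  ext x
  obtain ⟨i, rfl⟩ := hE x
  constructor
  · rintro ⟨j, hkj, hj⟩
    rw [← hj]
    exact hmono (Fin.le_def.mpr hkj)
  · intro hki
    exact ⟨i, Fin.le_def.mp (not_lt.mp fun hik => (hk i hik).not_ge hki), rfl⟩

variable (μ : Set X → ℝ)

def choquetWeight (E : Fin n → X) (k : ℕ) : ℝ := μ (enumTail E k) - μ (enumTail E (k + 1))

def choquetSum (g : X → ℝ) (E : Fin n → X) : ℝ := ∑ i : Fin n, g (E i) * choquetWeight μ E i

variable {μ}

theorem choquetWeight_nonneg (hμ : IsMonotoneMeasure μ) (E : Fin n → X) (k : ℕ) :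
    0 ≤ choquetWeight μ E k :=
  sub_nonneg.mpr (hμ.mono _ _ (enumTail_succ_subset E k))

theorem sum_choquetWeight (hμ : IsMonotoneMeasure μ) {E : Fin n → X} (hE : Surjective E) :
    ∑ i : Fin n, choquetWeight μ E i = 1 := by
  rw [Fin.sum_univ_eq_sum_range (choquetWeight μ E)]
  simp only [choquetWeight]
  rw [sum_range_sub' (fun k => μ (enumTail E k)), enumTail_zero hE, enumTail_eq_empty E le_rfl,
    hμ.univ, hμ.empty, sub_zero]

theorem choquetSum_eq_sum_range (hμ : μ ∅ = 0) (g : X → ℝ) (E : Fin n → X) (c : ℕ → ℝ)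
    (hc : ∀ i : Fin n, c i = g (E i)) :
    choquetSum μ g E
      = ∑ k ∈ range n, (c k - if k = 0 then 0 else c (k - 1)) * μ (enumTail E k) := by
  rw [← sum_range_mul_sub_succ c _ (by rw [enumTail_eq_empty E le_rfl, hμ]), choquetSum,
    ← Fin.sum_univ_eq_sum_range (fun k => c k * (μ (enumTail E k) - μ (enumTail E (k + 1))))]
  simp only [hc, choquetWeight]

theorem choquetSum_congr_of_comp_eq (hμ : μ ∅ = 0) {g : X → ℝ} {E E' : Fin n → X}
    (hE : Surjective E) (hE' : Surjective E') (hmono : Monotone (g ∘ E)) (heq : g ∘ E = g ∘ E') :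
    choquetSum μ g E = choquetSum μ g E' := by
  set c : ℕ → ℝ := fun k => if h : k < n then g (E ⟨k, h⟩) else 0
  have hc : ∀ i : Fin n, c i = g (E i) := fun i => by simp [c]
  have hc' : ∀ i : Fin n, c i = g (E' i) := fun i => (hc i).trans (congrFun heq i)
  have hmono' : Monotone (g ∘ E') := heq ▸ hmono
  rw [choquetSum_eq_sum_range hμ g E c hc, choquetSum_eq_sum_range hμ g E' c hc']
  refine sum_congr rfl fun k hk => ?_
  have hkn : k < n := mem_range.mp hk
  by_cases hjump : ∀ j < k, c j < c k
  · have hjumpAt (E : Fin n → X) (hc : ∀ i : Fin n, c i = g (E i)) :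
        ∀ j < (⟨k, hkn⟩ : Fin n), g (E j) < g (E ⟨k, hkn⟩) := fun j hj => by
      rw [← hc, ← hc]; exact hjump j hj
    rw [enumTail_eq_setOf_le (k := ⟨k, hkn⟩) hE hmono (hjumpAt E hc),
      enumTail_eq_setOf_le (k := ⟨k, hkn⟩) hE' hmono' (hjumpAt E' hc'), ← hc, ← hc']
  · have hk0 : k ≠ 0 := by rintro rfl; simp at hjump
    have hflat : c (k - 1) = c k := by
      obtain ⟨j, hjk, hcj⟩ := not_forall₂.mp hjump
      have hmono_c : ∀ {a b : ℕ}, a ≤ b → b < n → c a ≤ c b := fun {a b} hab hb => by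
        rw [hc ⟨a, hab.trans_lt hb⟩, hc ⟨b, hb⟩]; exact hmono (Fin.mk_le_mk.mpr hab)
      exact le_antisymm (hmono_c (Nat.sub_le k 1) hkn)
        ((not_lt.mp hcj).trans (hmono_c (Nat.le_sub_one_of_lt hjk) (by omega)))
    simp [hk0, hflat]

theorem ConvexOn.map_choquetSum_le {s : Set ℝ} {Φ : ℝ → ℝ} (hΦ : ConvexOn ℝ s Φ)
    (hμ : IsMonotoneMeasure μ) {g : X → ℝ} {E : Fin n → X} (hE : Surjective E)
    (hg : ∀ x, g x ∈ s) : Φ (choquetSum μ g E) ≤ choquetSum μ (Φ ∘ g) E := by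
  simp only [choquetSum, mul_comm (g _), mul_comm ((Φ ∘ g) _), ← smul_eq_mul]
  exact hΦ.map_sum_le (fun i _ => choquetWeight_nonneg hμ E i) (sum_choquetWeight hμ hE)
    fun i _ => hg (E i)

end Enumeration

section Choquet

variable {X : Type*} [Fintype X]

theorem exists_equiv_fin_monotone_comp {α : Type*} [LinearOrder α] (g : X → α) :
    ∃ E : Fin (Fintype.card X) ≃ X, Monotone (g ∘ E) :=
  ⟨(Tuple.sort (g ∘ (Fintype.equivFin X).symm)).trans (Fintype.equivFin X).symm,
    by exact Tuple.monotone_sort (g ∘ (Fintype.equivFin X).symm)⟩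

theorem choquet_eq_choquetSum {μ : Set X → ℝ} (hμ : μ ∅ = 0) {g : X → ℝ}
    (E : Fin (Fintype.card X) ≃ X) (hmono : Monotone (g ∘ E)) :
    choquet μ g = choquetSum μ g E := by
  set e := (Fintype.equivFin X).symm
  set σ := Tuple.sort (g ∘ e)
  have hsorted : choquet μ g = choquetSum μ g (σ.trans e) := by
    refine sum_congr rfl fun i _ => ?_
    simp only [choquetWeight, enumTail, Fin.le_def, Fin.lt_def, Nat.lt_iff_add_one_le]
    rfl
  have hτ : Monotone ((g ∘ e) ∘ (E.trans e.symm)) := by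
    simpa [comp_def] using hmono
  rw [hsorted]
  refine choquetSum_congr_of_comp_eq hμ (Equiv.surjective _) E.surjective
    (by exact Tuple.monotone_sort (g ∘ e)) ?_
  funext i
  simpa using congrFun (Tuple.unique_monotone (Tuple.monotone_sort (g ∘ e)) hτ) i

end Choquet

theorem stmt1_general {X : Type*} [Fintype X]
    (μ : Set X → ℝ) (hμ : IsMonotoneMeasure μ)
    (f : X → ℝ) (hf : ∀ x, 0 ≤ f x)
    (Φ : ℝ → ℝ)
    (hΦmono : ∀ x y : ℝ, 0 ≤ x → x ≤ y → Φ x ≤ Φ y)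
    (hΦconv : ConvexOn ℝ (Set.Ici (0:ℝ)) Φ) :
    Φ (choquet μ f) ≤ choquet μ (fun x => Φ (f x)) := by
  obtain ⟨E, hfE⟩ := exists_equiv_fin_monotone_comp f
  have hΦfE : Monotone ((fun x => Φ (f x)) ∘ E) := fun i j hij => hΦmono _ _ (hf _) (hfE hij)
  rw [choquet_eq_choquetSum hμ.empty E hfE, choquet_eq_choquetSum hμ.empty E hΦfE]
  exact hΦconv.map_choquetSum_le hμ E.surjective hf

/-- Jensen's inequality for Choquet integrals, convex case. -/
theorem stmt1 {X : Type*} [Fintype X] [Nonempty X]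
    (μ : Set X → ℝ) (hμ : IsMonotoneMeasure μ)
    (f : X → ℝ) (hf : ∀ x, 0 ≤ f x)
    (Φ : ℝ → ℝ) (hΦnn : ∀ x : ℝ, 0 ≤ x → 0 ≤ Φ x)
    (hΦmono : ∀ x y : ℝ, 0 ≤ x → x ≤ y → Φ x ≤ Φ y)
    (hΦconv : ConvexOn ℝ (Set.Ici (0:ℝ)) Φ) :
    Φ (choquet μ f) ≤ choquet μ (fun x => Φ (f x)) :=
  stmt1_general μ hμ f hf Φ hΦmono hΦconv
end

section
/- (Jensen's inequality for Sugeno integrals, expansive case.) Let μ be a monotone measure on a finite nonempty set X, f : X → [0,∞), and Φ : [0,∞) → [0,∞) a non-decreasing function with Φ(x) ≥ x for every x ∈ [0,1]. Then Φ(⨍ f dμ) ≥ ⨍ (Φ ∘ f) dμ, where both integrals are Sugeno integrals w.r.t. μ. -/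
/-- The Sugeno integral of `f : X → ℝ` w.r.t. `μ` on the finite nonempty set `X`:
`max_i min(μ(A*_i), f(x*_i))` where `x*` enumerates `X` with
`f(x*_1) ≤ … ≤ f(x*_n)` and `A*_i = {x*_i, …, x*_n}`. -/
noncomputable def sugeno {X : Type*} [Fintype X] [Nonempty X] (μ : Set X → ℝ) (f : X → ℝ) : ℝ :=
  let e : Fin (Fintype.card X) ≃ X := (Fintype.equivFin X).symm
  let σ : Equiv.Perm (Fin (Fintype.card X)) := Tuple.sort (f ∘ e)
  haveI : Nonempty (Fin (Fintype.card X)) := Fin.pos_iff_nonempty.mp Fintype.card_pos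
  Finset.univ.sup' Finset.univ_nonempty
    (fun i => min (μ {x | ∃ j, i ≤ j ∧ e (σ j) = x}) (f (e (σ i))))

/-!
For every set `A` and point `y ∈ A` minimising `f` on `A`, the term `min (μ A) (f y)` is
bounded by the Sugeno integral, and the Sugeno integral is the largest such term. Given such a
pair for `Φ ∘ f`, replace `y` by a minimiser `y'` of `f` on `A`; then
`min (μ A) (Φ (f y')) ≤ Φ (min (μ A) (f y'))` because `μ A ∈ [0, 1]` and `Φ` is expansive there,
and monotonicity of `Φ` finishes.
-/

namespace IsMonotoneMeasure

variable {X : Type*} {μ : Set X → ℝ}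

theorem monotone (hμ : IsMonotoneMeasure μ) : Monotone μ :=
  fun E F hEF => hμ.mono E F hEF

theorem nonneg (hμ : IsMonotoneMeasure μ) (E : Set X) : 0 ≤ μ E :=
  hμ.empty ▸ hμ.monotone (Set.empty_subset E)

theorem le_one (hμ : IsMonotoneMeasure μ) (E : Set X) : μ E ≤ 1 :=
  hμ.univ ▸ hμ.monotone (Set.subset_univ E)

end IsMonotoneMeasure

section Sugeno

variable {X : Type*} [Fintype X] [Nonempty X] {μ : Set X → ℝ} {f : X → ℝ}

theorem min_le_sugeno (hμ : Monotone μ) {A : Set X} {y : X} (hy : y ∈ A)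
    (hmin : ∀ z ∈ A, f y ≤ f z) : min (μ A) (f y) ≤ sugeno μ f := by
  classical
  unfold sugeno
  set e : Fin (Fintype.card X) ≃ X := (Fintype.equivFin X).symm
  set σ : Equiv.Perm (Fin (Fintype.card X)) := Tuple.sort (f ∘ e)
  have hsurj : ∀ z, e (σ (σ.symm (e.symm z))) = z := by simp
  -- the first position of the sorted enumeration that lies in `A`
  set T := Finset.univ.filter fun j => e (σ j) ∈ A
  have hT : T.Nonempty := ⟨σ.symm (e.symm y), by simp [T, hy]⟩
  have hmem : e (σ (T.min' hT)) ∈ A := by simpa [T] using T.min'_mem hT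
  refine le_trans ?_ (Finset.le_sup' _ (Finset.mem_univ (T.min' hT)))
  refine min_le_min (hμ fun z hz => ⟨_, T.min'_le _ ?_, hsurj z⟩) (hmin _ hmem)
  simpa [T, hsurj] using hz

theorem sugeno_le {c : ℝ}
    (h : ∀ (A : Set X) (y : X), y ∈ A → (∀ z ∈ A, f y ≤ f z) → min (μ A) (f y) ≤ c) :
    sugeno μ f ≤ c := by
  unfold sugeno
  refine Finset.sup'_le _ _ fun i _ => h _ _ ⟨i, le_rfl, rfl⟩ ?_
  rintro _ ⟨j, hij, rfl⟩
  exact Tuple.monotone_sort (f ∘ (Fintype.equivFin X).symm) hij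

end Sugeno

theorem min_le_apply_min_of_expansive {Φ : ℝ → ℝ} (hΦ : ∀ x ∈ Set.Icc (0 : ℝ) 1, x ≤ Φ x)
    {a : ℝ} (ha : a ∈ Set.Icc (0 : ℝ) 1) (b : ℝ) : min a (Φ b) ≤ Φ (min a b) := by
  rcases le_total a b with hab | hba
  · rw [min_eq_left hab]
    exact (min_le_left _ _).trans (hΦ a ha)
  · rw [min_eq_right hba]
    exact min_le_right _ _

theorem stmt8_general {X : Type*} [Fintype X] [Nonempty X]
    (μ : Set X → ℝ) (hμ : IsMonotoneMeasure μ)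
    (f : X → ℝ) (hf : ∀ x, 0 ≤ f x)
    (Φ : ℝ → ℝ)
    (hΦmono : ∀ x y : ℝ, 0 ≤ x → x ≤ y → Φ x ≤ Φ y)
    (hΦexp : ∀ x ∈ Set.Icc (0:ℝ) 1, x ≤ Φ x) :
    sugeno μ (fun x => Φ (f x)) ≤ Φ (sugeno μ f) := by
  refine sugeno_le fun A y hy hmin => ?_
  obtain ⟨y', hy', hy'min⟩ := A.exists_min_image f A.toFinite ⟨y, hy⟩
  have hμA : μ A ∈ Set.Icc (0 : ℝ) 1 := ⟨hμ.nonneg A, hμ.le_one A⟩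
  calc min (μ A) (Φ (f y)) ≤ min (μ A) (Φ (f y')) := min_le_min_left _ (hmin y' hy')
    _ ≤ Φ (min (μ A) (f y')) := min_le_apply_min_of_expansive hΦexp hμA _
    _ ≤ Φ (sugeno μ f) :=
      hΦmono _ _ (le_min hμA.1 (hf y')) (min_le_sugeno hμ.monotone hy' hy'min)

/-- Jensen's inequality for Sugeno integrals, expansive case. -/
theorem stmt8 {X : Type*} [Fintype X] [Nonempty X]
    (μ : Set X → ℝ) (hμ : IsMonotoneMeasure μ)
    (f : X → ℝ) (hf : ∀ x, 0 ≤ f x)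
    (Φ : ℝ → ℝ) (hΦnn : ∀ x : ℝ, 0 ≤ x → 0 ≤ Φ x)
    (hΦmono : ∀ x y : ℝ, 0 ≤ x → x ≤ y → Φ x ≤ Φ y)
    (hΦexp : ∀ x ∈ Set.Icc (0:ℝ) 1, x ≤ Φ x) :
    sugeno μ (fun x => Φ (f x)) ≤ Φ (sugeno μ f) :=
  stmt8_general μ hμ f hf Φ hΦmono hΦexp
end

section
/- Let T be a left-continuous t-norm, μ a monotone measure on a finite nonempty set X, and R a T-equivalence relation on X. For every fuzzy set A on X, the Sugeno upper approximation U(y) = ⨍ T(R(x,y), A(x)) dμ(x) is a fixed point of the classical upper approximation: max_{x∈X} T(R(x,y), U(x)) = U(y) for every y ∈ X. -/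
/-- `R` is a `T`-equivalence relation: a `[0,1]`-valued reflexive, symmetric and
`T`-transitive fuzzy relation. -/
structure IsTEquiv {X : Type*} (T : ℝ → ℝ → ℝ) (R : X → X → ℝ) : Prop where
  mem : ∀ x y, R x y ∈ Set.Icc (0:ℝ) 1
  refl : ∀ x, R x x = 1
  symm : ∀ x y, R x y = R y x
  trans : ∀ x y z, T (R x y) (R y z) ≤ R x z

open Set

section Sugeno

variable {X : Type*} [Fintype X] [Nonempty X] {μ : Set X → ℝ}

theorem exists_sugeno_eq (μ : Set X → ℝ) (f : X → ℝ) :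
    ∃ S : Set X, ∃ z ∈ S, (∀ w ∈ S, f z ≤ f w) ∧ sugeno μ f = min (μ S) (f z) := by
  set e : Fin (Fintype.card X) ≃ X := (Fintype.equivFin X).symm
  set σ : Equiv.Perm (Fin (Fintype.card X)) := Tuple.sort (f ∘ e)
  have : Nonempty (Fin (Fintype.card X)) := Fin.pos_iff_nonempty.mp Fintype.card_pos
  obtain ⟨i, -, hi⟩ := Finset.exists_mem_eq_sup' Finset.univ_nonempty
    (fun i => min (μ {x | ∃ j, i ≤ j ∧ e (σ j) = x}) (f (e (σ i))))
  refine ⟨{x | ∃ j, i ≤ j ∧ e (σ j) = x}, e (σ i), ⟨i, le_rfl, rfl⟩, ?_, hi⟩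
  rintro _ ⟨j, hij, rfl⟩
  exact Tuple.monotone_sort (f ∘ e) hij

theorem min_le_sugeno_s11 (hμ : Monotone μ) (f : X → ℝ) {S : Set X} (hS : S.Nonempty) {c : ℝ}
    (hc : ∀ w ∈ S, c ≤ f w) : min (μ S) c ≤ sugeno μ f := by
  classical
  set e : Fin (Fintype.card X) ≃ X := (Fintype.equivFin X).symm
  set σ : Equiv.Perm (Fin (Fintype.card X)) := Tuple.sort (f ∘ e)
  have : Nonempty (Fin (Fintype.card X)) := Fin.pos_iff_nonempty.mp Fintype.card_pos
  obtain ⟨w, hw⟩ := hS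
  -- the tail of the sorted enumeration starting at the first point of `S` contains `S`
  set J := Finset.univ.filter fun j => e (σ j) ∈ S
  have hJ : J.Nonempty := ⟨σ.symm (e.symm w), by simp [J, hw]⟩
  have hmin : e (σ (J.min' hJ)) ∈ S := by simpa [J] using J.min'_mem hJ
  have hsub : S ⊆ {x | ∃ j, J.min' hJ ≤ j ∧ e (σ j) = x} := fun x hx =>
    ⟨σ.symm (e.symm x), J.min'_le _ (by simpa [J] using hx), by simp⟩
  exact (min_le_min (hμ hsub) (hc _ hmin)).trans <| Finset.le_sup'
    (fun i => min (μ {x | ∃ j, i ≤ j ∧ e (σ j) = x}) (f (e (σ i)))) (Finset.mem_univ _)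

theorem sugeno_mem_Icc (hμ : ∀ S, 0 ≤ μ S) {f : X → ℝ} (hf : ∀ x, f x ∈ Icc (0 : ℝ) 1) :
    sugeno μ f ∈ Icc (0 : ℝ) 1 := by
  obtain ⟨S, z, -, -, hU⟩ := exists_sugeno_eq μ f
  rw [hU]
  exact ⟨le_min (hμ S) (hf z).1, min_le_of_right_le (hf z).2⟩

end Sugeno

theorem IsMonotoneMeasure.monotone_s11 {X : Type*} {μ : Set X → ℝ} (hμ : IsMonotoneMeasure μ) :
    Monotone μ :=
  fun E F h => hμ.mono E F h

theorem IsMonotoneMeasure.nonneg_s11 {X : Type*} {μ : Set X → ℝ} (hμ : IsMonotoneMeasure μ)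
    (S : Set X) : 0 ≤ μ S :=
  hμ.empty ▸ hμ.mono _ _ (empty_subset S)

namespace IsTNorm

variable {T : ℝ → ℝ → ℝ} {a b : ℝ}

theorem le_right (hT : IsTNorm T) (ha : a ∈ Icc (0 : ℝ) 1) (hb : b ∈ Icc (0 : ℝ) 1) :
    T a b ≤ b :=
  calc T a b ≤ T 1 b := hT.mono a ha 1 ⟨zero_le_one, le_rfl⟩ b hb b hb ha.2 le_rfl
    _ = b := hT.one_left b hb

theorem map_min_le (hT : IsTNorm T) (ha : a ∈ Icc (0 : ℝ) 1) (hb : b ∈ Icc (0 : ℝ) 1)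
    {m : ℝ} (hm : 0 ≤ m) : T a (min m b) ≤ min m (T a b) := by
  have hmb : min m b ∈ Icc (0 : ℝ) 1 := ⟨le_min hm hb.1, min_le_of_right_le hb.2⟩
  exact le_min ((hT.le_right ha hmb).trans (min_le_left _ _))
    (hT.mono a ha a ha _ hmb b hb le_rfl (min_le_right _ _))

theorem map_sugeno_le {X : Type*} [Fintype X] [Nonempty X] (hT : IsTNorm T)
    {μ : Set X → ℝ} (hμ : Monotone μ) (hμ0 : ∀ S, 0 ≤ μ S) (ha : a ∈ Icc (0 : ℝ) 1)
    {f g : X → ℝ} (hf : ∀ x, f x ∈ Icc (0 : ℝ) 1) (hfg : ∀ x, T a (f x) ≤ g x) :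
    T a (sugeno μ f) ≤ sugeno μ g := by
  obtain ⟨S, z, hzS, hz, hU⟩ := exists_sugeno_eq μ f
  rw [hU]
  refine (hT.map_min_le ha (hf z) (hμ0 S)).trans (min_le_sugeno_s11 hμ g ⟨z, hzS⟩ fun w hw => ?_)
  exact (hT.mono a ha a ha _ (hf z) _ (hf w) le_rfl (hz w hw)).trans (hfg w)

end IsTNorm

theorem IsTEquiv.tnorm_tnorm_le {X : Type*} {T : ℝ → ℝ → ℝ} {R : X → X → ℝ}
    (hR : IsTEquiv T R) (hT : IsTNorm T) {a : ℝ} (ha : a ∈ Icc (0 : ℝ) 1) (w x y : X) :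
    T (R x y) (T (R w x) a) ≤ T (R w y) a := by
  rw [← hT.assoc _ (hR.mem x y) _ (hR.mem w x) _ ha, hT.comm _ (hR.mem x y) _ (hR.mem w x)]
  exact hT.mono _ (hT.maps_to _ (hR.mem w x) _ (hR.mem x y)) _ (hR.mem w y) _ ha _ ha
    (hR.trans w x y) le_rfl

theorem stmt11_general {X : Type*} [Fintype X] [Nonempty X]
    (T : ℝ → ℝ → ℝ) (hT : IsTNorm T)
    (μ : Set X → ℝ) (hμ : IsMonotoneMeasure μ)
    (R : X → X → ℝ) (hR : IsTEquiv T R)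
    (A : X → ℝ) (hA : ∀ x, A x ∈ Set.Icc (0:ℝ) 1) :
    ∀ y : X,
      Finset.univ.sup' Finset.univ_nonempty
          (fun x => T (R x y) (sugeno μ (fun x' => T (R x' x) (A x'))))
        = sugeno μ (fun x' => T (R x' y) (A x')) := by
  intro y
  have hf : ∀ x x', T (R x' x) (A x') ∈ Icc (0 : ℝ) 1 := fun x x' =>
    hT.maps_to _ (hR.mem x' x) _ (hA x')
  apply le_antisymm
  · exact Finset.sup'_le _ _ fun x _ =>
      hT.map_sugeno_le hμ.monotone_s11 hμ.nonneg_s11 (hR.mem x y) (hf x) fun w =>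
        hR.tnorm_tnorm_le hT (hA w) w x y
  · calc sugeno μ (fun x' => T (R x' y) (A x'))
        = T (R y y) (sugeno μ (fun x' => T (R x' y) (A x'))) := by
          rw [hR.refl, hT.one_left _ (sugeno_mem_Icc hμ.nonneg_s11 (hf y))]
      _ ≤ _ := Finset.le_sup' (fun x => T (R x y) (sugeno μ (fun x' => T (R x' x) (A x'))))
          (Finset.mem_univ y)

/-- the Sugeno upper approximation is a fixed point of the classical
upper approximation. -/
theorem stmt11 {X : Type*} [Fintype X] [Nonempty X]
    (T : ℝ → ℝ → ℝ) (hT : IsTNorm T) (hTlc : LeftContinuousTNorm T)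
    (μ : Set X → ℝ) (hμ : IsMonotoneMeasure μ)
    (R : X → X → ℝ) (hR : IsTEquiv T R)
    (A : X → ℝ) (hA : ∀ x, A x ∈ Set.Icc (0:ℝ) 1) :
    ∀ y : X,
      Finset.univ.sup' Finset.univ_nonempty
          (fun x => T (R x y) (sugeno μ (fun x' => T (R x' x) (A x'))))
        = sugeno μ (fun x' => T (R x' y) (A x')) :=
  stmt11_general T hT μ hμ R hR A hA
end

section
/- If T is a D-convex left-continuous t-norm and I its residual implicator, then I is concave in its second argument: for all x, y₁, y₂, w ∈ [0,1], I(x, w·y₁ + (1−w)·y₂) ≥ w·I(x, y₁) + (1−w)·I(x, y₂). -/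
/-- `T` is D-convex: convex in each argument separately on `[0,1]`. -/
def DConvex (T : ℝ → ℝ → ℝ) : Prop :=
  ∀ a ∈ Set.Icc (0:ℝ) 1, ∀ b ∈ Set.Icc (0:ℝ) 1, ∀ y ∈ Set.Icc (0:ℝ) 1, ∀ w ∈ Set.Icc (0:ℝ) 1,
    T (w * a + (1 - w) * b) y ≤ w * T a y + (1 - w) * T b y ∧
    T y (w * a + (1 - w) * b) ≤ w * T y a + (1 - w) * T y b

section Residuum

variable {T : ℝ → ℝ → ℝ} {x y l : ℝ}

lemma IsTNorm.apply_zero_right_nonpos (hT : IsTNorm T) (hx : x ∈ Set.Icc (0:ℝ) 1) :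
    T x 0 ≤ 0 := by
  have h0 : (0:ℝ) ∈ Set.Icc (0:ℝ) 1 := Set.left_mem_Icc.2 zero_le_one
  have h1 : (1:ℝ) ∈ Set.Icc (0:ℝ) 1 := Set.right_mem_Icc.2 zero_le_one
  calc T x 0 ≤ T 1 0 := hT.mono x hx 1 h1 0 h0 0 h0 hx.2 le_rfl
    _ = 0 := hT.one_left 0 h0

lemma IsTNorm.zero_mem_residSet_s13 (hT : IsTNorm T) (hx : x ∈ Set.Icc (0:ℝ) 1) (hy : 0 ≤ y) :
    (0:ℝ) ∈ {l | l ∈ Set.Icc (0:ℝ) 1 ∧ T x l ≤ y} :=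
  ⟨Set.left_mem_Icc.2 zero_le_one, (hT.apply_zero_right_nonpos hx).trans hy⟩

lemma bddAbove_residSet : BddAbove {l | l ∈ Set.Icc (0:ℝ) 1 ∧ T x l ≤ y} :=
  ⟨1, fun _ hl => hl.1.2⟩

lemma le_resid (hl : l ∈ Set.Icc (0:ℝ) 1) (hTl : T x l ≤ y) : l ≤ resid T x y :=
  le_csSup bddAbove_residSet ⟨hl, hTl⟩

lemma IsTNorm.resid_mem_Icc_s13 (hT : IsTNorm T) (hx : x ∈ Set.Icc (0:ℝ) 1) (hy : 0 ≤ y) :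
    resid T x y ∈ Set.Icc (0:ℝ) 1 :=
  ⟨le_csSup bddAbove_residSet (hT.zero_mem_residSet_s13 hx hy),
    csSup_le ⟨0, hT.zero_mem_residSet_s13 hx hy⟩ fun _ hl => hl.1.2⟩

lemma IsTNorm.apply_resid_le_s13 (hT : IsTNorm T) (hTlc : LeftContinuousTNorm T)
    (hx : x ∈ Set.Icc (0:ℝ) 1) (hy : 0 ≤ y) : T x (resid T x y) ≤ y := by
  have hne : {l | l ∈ Set.Icc (0:ℝ) 1 ∧ T x l ≤ y}.Nonempty := ⟨0, hT.zero_mem_residSet_s13 hx hy⟩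
  rw [resid, hTlc x hx _ hne fun _ hl => hl.1]
  exact csSup_le (hne.image _) (by rintro _ ⟨l, hl, rfl⟩; exact hl.2)

end Residuum

/-- the residual implicator of a D-convex left-continuous t-norm is
concave in its second argument. -/
theorem stmt13 (T : ℝ → ℝ → ℝ) (hT : IsTNorm T) (hTlc : LeftContinuousTNorm T)
    (hTconv : DConvex T) :
    ∀ x ∈ Set.Icc (0:ℝ) 1, ∀ y₁ ∈ Set.Icc (0:ℝ) 1, ∀ y₂ ∈ Set.Icc (0:ℝ) 1,
      ∀ w ∈ Set.Icc (0:ℝ) 1,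
        w * resid T x y₁ + (1 - w) * resid T x y₂ ≤ resid T x (w * y₁ + (1 - w) * y₂) := by
  intro x hx y₁ hy₁ y₂ hy₂ w hw
  have hl₁ := hT.resid_mem_Icc_s13 hx hy₁.1
  have hl₂ := hT.resid_mem_Icc_s13 hx hy₂.1
  have hw' : 0 ≤ 1 - w := sub_nonneg.2 hw.2
  apply le_resid (convex_Icc 0 1 hl₁ hl₂ hw.1 hw' (add_sub_cancel w 1))
  calc T x (w * resid T x y₁ + (1 - w) * resid T x y₂)
      ≤ w * T x (resid T x y₁) + (1 - w) * T x (resid T x y₂) :=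
        (hTconv _ hl₁ _ hl₂ x hx w hw).2
    _ ≤ w * y₁ + (1 - w) * y₂ := by
        gcongr
        · exact hw.1
        · exact hT.apply_resid_le_s13 hTlc hx hy₁.1
        · exact hT.apply_resid_le_s13 hTlc hx hy₂.1
end

section
/- Let T be a left-continuous t-norm, I its residual implicator, and R a T-equivalence relation on a finite nonempty set X. A fuzzy set A on X is granularly representable w.r.t. R if and only if it is a fixed point of both classical approximations, i.e. min_{x∈X} I(R(x,y), A(x)) = A(y) and max_{x∈X} T(R(x,y), A(x)) = A(y) for every y ∈ X. -/
/-- `A` is granularly representable w.r.t. `T` and `R`: for every `y`,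
`A(y)` is the supremum of the values `T(λ, R(x,y))` over all granules
`R_λ(x) = (z ↦ T(λ, R(x,z)))` that are (pointwise) contained in `A`. -/
def GranRep {X : Type*} (T : ℝ → ℝ → ℝ) (R : X → X → ℝ) (A : X → ℝ) : Prop :=
  ∀ y, A y = sSup {v | ∃ l ∈ Set.Icc (0:ℝ) 1, ∃ x, (∀ z, T l (R x z) ≤ A z) ∧ v = T l (R x y)}

/-!
`A` is a fixed point of the lower approximation (and then also of the upper one) exactly when
it is extensional, `T (R x y) (A x) ≤ A y`, and so is granular representability. An extensional `A` contains
the granule `R_{A y}(y)`, which takes the value `A y` at `y`; conversely, left-continuity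
lets `T (R x y)` pass under the supremum defining `A x`, and `T`-transitivity of `R` moves
each granule contained in `A` from `x` to `y`. The lower approximation is linked to
extensionality by the residuation `l ≤ I(a, b) ↔ T(a, l) ≤ b`.
-/

local notation "𝕀" => Set.Icc (0:ℝ) 1

namespace IsTNorm

variable {T : ℝ → ℝ → ℝ}

lemma right_one (hT : IsTNorm T) {x : ℝ} (hx : x ∈ 𝕀) : T x 1 = x := by
  rw [hT.comm x hx 1 unitInterval.one_mem, hT.one_left x hx]

lemma right_zero (hT : IsTNorm T) {x : ℝ} (hx : x ∈ 𝕀) : T x 0 = 0 :=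
  le_antisymm
    ((hT.mono x hx 1 unitInterval.one_mem 0 unitInterval.zero_mem 0 unitInterval.zero_mem
      hx.2 le_rfl).trans_eq (hT.one_left 0 unitInterval.zero_mem))
    (hT.maps_to x hx 0 unitInterval.zero_mem).1

lemma left_zero (hT : IsTNorm T) {x : ℝ} (hx : x ∈ 𝕀) : T 0 x = 0 := by
  rw [hT.comm 0 unitInterval.zero_mem x hx, hT.right_zero hx]

end IsTNorm

section Residuation

variable {T : ℝ → ℝ → ℝ} {a b : ℝ}

lemma zero_mem_resid_set (hT : IsTNorm T) (ha : a ∈ 𝕀) (hb : 0 ≤ b) :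
    (0:ℝ) ∈ {l | l ∈ 𝕀 ∧ T a l ≤ b} :=
  ⟨unitInterval.zero_mem, (hT.right_zero ha).trans_le hb⟩

lemma le_resid_s14 {l : ℝ} (hl : l ∈ 𝕀) (h : T a l ≤ b) : l ≤ resid T a b :=
  le_csSup ⟨1, fun _ hm => hm.1.2⟩ ⟨hl, h⟩

lemma resid_mem (hT : IsTNorm T) (ha : a ∈ 𝕀) (hb : 0 ≤ b) : resid T a b ∈ 𝕀 :=
  ⟨le_resid_s14 unitInterval.zero_mem (zero_mem_resid_set hT ha hb).2,
    csSup_le ⟨0, zero_mem_resid_set hT ha hb⟩ fun _ hl => hl.1.2⟩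

lemma resid_one (hT : IsTNorm T) (hb : b ∈ 𝕀) : resid T 1 b = b :=
  le_antisymm
    (csSup_le ⟨0, zero_mem_resid_set hT unitInterval.one_mem hb.1⟩
      fun l hl => (hT.one_left l hl.1).symm.trans_le hl.2)
    (le_resid_s14 hb (hT.one_left b hb).le)

lemma le_resid_iff (hT : IsTNorm T) (hTlc : LeftContinuousTNorm T) (ha : a ∈ 𝕀) (hb : 0 ≤ b)
    {l : ℝ} (hl : l ∈ 𝕀) : l ≤ resid T a b ↔ T a l ≤ b := by
  refine ⟨fun h => ?_, le_resid_s14 hl⟩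
  have hne : {l | l ∈ 𝕀 ∧ T a l ≤ b}.Nonempty := ⟨0, zero_mem_resid_set hT ha hb⟩
  have hT_resid : T a (resid T a b) ≤ b := by
    rw [resid, hTlc a ha _ hne fun _ hm => hm.1]
    exact csSup_le (hne.image _) (by rintro _ ⟨m, hm, rfl⟩; exact hm.2)
  exact (hT.mono a ha a ha l hl _ (resid_mem hT ha hb) le_rfl h).trans hT_resid

end Residuation

def IsExtensional {X : Type*} (T : ℝ → ℝ → ℝ) (R : X → X → ℝ) (A : X → ℝ) : Prop :=
  ∀ x y, T (R x y) (A x) ≤ A y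

section Granules

variable {X : Type*} {T : ℝ → ℝ → ℝ} {R : X → X → ℝ} {A : X → ℝ}

def granuleValues (T : ℝ → ℝ → ℝ) (R : X → X → ℝ) (A : X → ℝ) (y : X) : Set ℝ :=
  {v | ∃ l ∈ 𝕀, ∃ x, (∀ z, T l (R x z) ≤ A z) ∧ v = T l (R x y)}

lemma granRep_iff : GranRep T R A ↔ ∀ y, A y = sSup (granuleValues T R A y) := Iff.rfl

lemma granuleValues_subset (hT : IsTNorm T) (hR : IsTEquiv T R) (y : X) :
    granuleValues T R A y ⊆ 𝕀 := by
  rintro _ ⟨l, hl, x, -, rfl⟩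
  exact hT.maps_to l hl _ (hR.mem x y)

lemma IsExtensional.mem_granuleValues (hT : IsTNorm T) (hR : IsTEquiv T R)
    (hA : ∀ x, A x ∈ 𝕀) (hext : IsExtensional T R A) (y : X) :
    A y ∈ granuleValues T R A y := by
  refine ⟨A y, hA y, y, fun z => ?_, by rw [hR.refl y, hT.right_one (hA y)]⟩
  rw [hT.comm _ (hA y) _ (hR.mem y z)]
  exact hext y z

lemma IsExtensional.granRep (hT : IsTNorm T) (hR : IsTEquiv T R)
    (hA : ∀ x, A x ∈ 𝕀) (hext : IsExtensional T R A) : GranRep T R A := fun y =>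
  have hmem := hext.mem_granuleValues hT hR hA y
  le_antisymm (le_csSup ⟨1, fun _ hv => (granuleValues_subset hT hR y hv).2⟩ hmem)
    (csSup_le ⟨_, hmem⟩ fun _ ⟨_, _, _, hc, hv⟩ => hv ▸ hc y)

lemma GranRep.isExtensional (hT : IsTNorm T) (hTlc : LeftContinuousTNorm T)
    (hR : IsTEquiv T R) (hA : ∀ x, A x ∈ 𝕀) (hgr : GranRep T R A) : IsExtensional T R A := by
  intro x y
  have hne : (granuleValues T R A x).Nonempty :=
    ⟨_, 0, unitInterval.zero_mem, x, fun z => (hT.left_zero (hR.mem x z)).trans_le (hA z).1,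
      rfl⟩
  rw [granRep_iff.1 hgr x, hTlc (R x y) (hR.mem x y) _ hne (granuleValues_subset hT hR x)]
  refine csSup_le (hne.image _) ?_
  rintro _ ⟨_, ⟨l, hl, w, hc, rfl⟩, rfl⟩
  have hRwx := hR.mem w x
  have hRxy := hR.mem x y
  calc T (R x y) (T l (R w x)) = T l (T (R w x) (R x y)) := by
        rw [hT.comm _ hRxy _ (hT.maps_to l hl _ hRwx), hT.assoc l hl _ hRwx _ hRxy]
    _ ≤ T l (R w y) :=
        hT.mono l hl l hl _ (hT.maps_to _ hRwx _ hRxy) _ (hR.mem w y) le_rfl (hR.trans w x y)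
    _ ≤ A y := hc y

lemma granRep_iff_isExtensional (hT : IsTNorm T) (hTlc : LeftContinuousTNorm T)
    (hR : IsTEquiv T R) (hA : ∀ x, A x ∈ 𝕀) : GranRep T R A ↔ IsExtensional T R A :=
  ⟨GranRep.isExtensional hT hTlc hR hA, IsExtensional.granRep hT hR hA⟩

end Granules

section Approximations

variable {X : Type*} [Fintype X] [Nonempty X] {T : ℝ → ℝ → ℝ} {R : X → X → ℝ} {A : X → ℝ}

lemma IsExtensional.inf'_resid_eq (hT : IsTNorm T) (hR : IsTEquiv T R) (hA : ∀ x, A x ∈ 𝕀)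
    (hext : IsExtensional T R A) (y : X) :
    Finset.univ.inf' Finset.univ_nonempty (fun x => resid T (R x y) (A x)) = A y := by
  refine le_antisymm ?_ (Finset.le_inf' _ _ fun x _ => le_resid_s14 (hA y) ?_)
  · exact (Finset.inf'_le _ (Finset.mem_univ y)).trans_eq (by rw [hR.refl y, resid_one hT (hA y)])
  · rw [← hR.symm y x]
    exact hext y x

lemma IsExtensional.sup'_eq (hT : IsTNorm T) (hR : IsTEquiv T R) (hA : ∀ x, A x ∈ 𝕀)
    (hext : IsExtensional T R A) (y : X) :
    Finset.univ.sup' Finset.univ_nonempty (fun x => T (R x y) (A x)) = A y :=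
  le_antisymm (Finset.sup'_le _ _ fun x _ => hext x y)
    ((Finset.le_sup' (fun x => T (R x y) (A x)) (Finset.mem_univ y)).trans_eq'
      (by rw [hR.refl y, hT.one_left _ (hA y)]))

lemma isExtensional_of_inf'_resid_eq (hT : IsTNorm T) (hTlc : LeftContinuousTNorm T)
    (hR : IsTEquiv T R) (hA : ∀ x, A x ∈ 𝕀)
    (hfix : ∀ y, Finset.univ.inf' Finset.univ_nonempty (fun x => resid T (R x y) (A x)) = A y) :
    IsExtensional T R A := by
  intro x y
  have hle : A x ≤ resid T (R y x) (A y) :=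
    (hfix x).symm.trans_le (Finset.inf'_le _ (Finset.mem_univ y))
  rw [hR.symm x y]
  exact (le_resid_iff hT hTlc (hR.mem y x) (hA y).1 (hA x)).1 hle

end Approximations

/-- `A` is granularly representable iff it is a fixed point of both the
classical lower and upper approximations. -/
theorem stmt14 {X : Type*} [Fintype X] [Nonempty X]
    (T : ℝ → ℝ → ℝ) (hT : IsTNorm T) (hTlc : LeftContinuousTNorm T)
    (R : X → X → ℝ) (hR : IsTEquiv T R)
    (A : X → ℝ) (hA : ∀ x, A x ∈ Set.Icc (0:ℝ) 1) :
    GranRep T R A ↔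
      ((∀ y, Finset.univ.inf' Finset.univ_nonempty (fun x => resid T (R x y) (A x)) = A y) ∧
       (∀ y, Finset.univ.sup' Finset.univ_nonempty (fun x => T (R x y) (A x)) = A y)) := by
  rw [granRep_iff_isExtensional hT hTlc hR hA]
  exact ⟨fun hext => ⟨hext.inf'_resid_eq hT hR hA, hext.sup'_eq hT hR hA⟩,
    fun ⟨hlower, _⟩ => isExtensional_of_inf'_resid_eq hT hTlc hR hA hlower⟩
end

section
/- (Non-granularity of the WOWAC lower approximation.) Let X = {x₁, x₂, x₃}, let R be the fuzzy relation on X given by the symmetric matrix R(x₁,x₂) = R(x₂,x₃) = 0.5, R(x₁,x₃) = 1, R(xᵢ,xᵢ) = 1 (which is a T_L-equivalence relation), and let A = (0, 1, 0). Define the WOWAC lower approximation of A with identity RIM quantifier by L(y) = (Σ_{x∈X} I_L(R(x,y), A(x))·R(x,y)) / (Σ_{x∈X} R(x,y)). Then L = (0.2, 0.75, 0.2), while min_{x∈X} I_L(R(x,x₂), L(x)) = 0.7 ≠ 0.75 = L(x₂); hence L is not a fixed point of the classical lower approximation and in particular L is not granularly representable w.r.t. R. -/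
/-!
A granularly representable fuzzy set `B` w.r.t. a `T_L`-equivalence `R` is a fixed point of the
classical lower approximation: `T_L`-transitivity of `R` makes every granule contained in `B`
satisfy `R_λ(w)(y) ≤ I_L(R(x,y), B(x))`, and `B(y)` is the supremum of such granule values.
For the WOWAC approximation `L` of the example, the lower approximation at `x₂` is
`I_L(R(x₁,x₂), L(x₁)) = 1 - 1/2 + 1/5 = 7/10 < 3/4 = L(x₂)`.
-/

/-- The Łukasiewicz t-norm. -/
noncomputable def TL (x y : ℝ) : ℝ := max 0 (x + y - 1)

/-- The Łukasiewicz (residual) implicator. -/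
noncomputable def IL (x y : ℝ) : ℝ := min 1 (1 - x + y)

noncomputable def lowerApprox {X : Type*} [Fintype X] [Nonempty X] (R : X → X → ℝ) (B : X → ℝ)
    (y : X) : ℝ :=
  Finset.univ.inf' Finset.univ_nonempty fun x => IL (R x y) (B x)

section GranRep

variable {X : Type*} {R : X → X → ℝ} {B : X → ℝ}

theorem GranRep.nonneg (hB : GranRep TL R B) (x : X) : 0 ≤ B x := by
  rw [hB x]
  exact Real.sSup_nonneg fun v ⟨_, _, _, _, hv⟩ => hv ▸ le_max_left _ _

theorem GranRep.le_one (hR : IsTEquiv TL R) (hB : GranRep TL R B) (y : X) : B y ≤ 1 := by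
  rw [hB y]
  refine Real.sSup_le (fun v ⟨l, hl, w, _, hv⟩ => ?_) zero_le_one
  have := (hR.mem w y).2
  rw [hv, TL]
  exact max_le zero_le_one (by linarith [hl.2])

theorem GranRep.le_IL (hR : IsTEquiv TL R) (hB : GranRep TL R B) (x y : X) :
    B y ≤ IL (R x y) (B x) := by
  refine le_min (hB.le_one hR y) ?_
  rw [hB y]
  refine Real.sSup_le (fun v ⟨l, _, w, hw, hv⟩ => ?_) (by linarith [hB.nonneg x, (hR.mem x y).2])
  have htrans : R w y + R x y - 1 ≤ R w x := by
    have := hR.trans w y x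
    rw [TL, hR.symm y x] at this
    exact (le_max_right _ _).trans this
  have hx : l + R w x - 1 ≤ B x := (le_max_right _ _).trans (hw x)
  rw [hv, TL]
  exact max_le (by linarith [hB.nonneg x, (hR.mem x y).2]) (by linarith)

variable [Fintype X] [Nonempty X]

theorem lowerApprox_le (hR : ∀ x, R x x = 1) (y : X) : lowerApprox R B y ≤ B y := by
  refine (Finset.inf'_le _ (Finset.mem_univ y)).trans ?_
  rw [hR y, IL]
  exact (min_le_right _ _).trans_eq (by ring)

theorem GranRep.lowerApprox_eq (hR : IsTEquiv TL R) (hB : GranRep TL R B) :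
    lowerApprox R B = B :=
  funext fun y => (lowerApprox_le hR.refl y).antisymm <|
    Finset.le_inf' _ _ fun x _ => hB.le_IL hR x y

end GranRep

/-- the WOWAC lower approximation (identity RIM quantifier) of
`A = (0,1,0)` w.r.t. the given `T_L`-equivalence relation on a 3-element set equals
`(0.2, 0.75, 0.2)` and is neither a fixed point of the classical lower approximation
nor granularly representable. -/
theorem stmt16 :
    let R : Fin 3 → Fin 3 → ℝ := ![![1, 1/2, 1], ![1/2, 1, 1/2], ![1, 1/2, 1]]
    let A : Fin 3 → ℝ := ![0, 1, 0]
    let L : Fin 3 → ℝ := fun y => (∑ x, IL (R x y) (A x) * R x y) / (∑ x, R x y)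
    IsTEquiv TL R ∧
    L = ![1/5, 3/4, 1/5] ∧
    Finset.univ.inf' Finset.univ_nonempty (fun x => IL (R x 1) (L x)) = 7/10 ∧
    L 1 = 3/4 ∧
    Finset.univ.inf' Finset.univ_nonempty (fun x => IL (R x 1) (L x)) ≠ L 1 ∧
    ¬ GranRep TL R L := by
  intro R A L
  have hR : IsTEquiv TL R := by
    constructor
    · intro x y; fin_cases x <;> fin_cases y <;> norm_num [R]
    · intro x; fin_cases x <;> norm_num [R]
    · intro x y; fin_cases x <;> fin_cases y <;> norm_num [R]
    · intro x y z; fin_cases x <;> fin_cases y <;> fin_cases z <;> norm_num [R, TL]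
  have hL : L = ![1/5, 3/4, 1/5] := by
    funext y
    fin_cases y <;>
      norm_num [L, R, A, IL, Fin.sum_univ_three, Matrix.cons_val_two, Matrix.tail_cons,
        Matrix.head_cons]
  have hlow : lowerApprox R L 1 = 7/10 := by
    norm_num [lowerApprox, hL, R, IL, Fin.univ_succ, Matrix.cons_val_two, Matrix.tail_cons,
      Matrix.head_cons]
  have hL1 : L 1 = 3/4 := by simp [hL]
  have hne : lowerApprox R L 1 ≠ L 1 := by rw [hlow, hL1]; norm_num
  exact ⟨hR, hL, hlow, hL1, hne, fun hG => hne (congrFun (hG.lowerApprox_eq hR) 1)⟩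
end
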